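/- arXiv:1901.07516 — 5 statements merged into one kernel-verified Lean document; each statement's English description precedes it below -/
import Mathlib

section
/- Let H be a real Hilbert space and let (V_1,…,V_N) be an innately regular collection of closed linear subspaces of H. Let η ∈ (0,1] and γ > 0. Then there exists a constant C < ∞ (depending only on (V_1,…,V_N), η and γ) such that for every initial point x_0 ∈ H, every control sequence (i_n)_{n≥0} with i_n ∈ {1,…,N}, and every sequence of relaxation coefficients (λ_n)_{n≥0} with λ_n ∈ [η, 2−η], the trajectory defined by x_{n+1} := P_{i_n,λ_n}(x_n) satisfies ∑_{n=0}^∞ ‖x_{n+1} − x_n‖^γ ≤ C·‖x_0‖^γ. -/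
/-
Induction on the number `m` of subspaces the control may visit, simultaneously for all exponents
`γ > 0`. Let `d` be the distance to the intersection `V_J` of the visited subspaces. Every step is
Fejér monotone: `d(x_{n+1})² + (η/2)‖x_{n+1} - x_n‖² ≤ d(x_n)²`. Cut the trajectory at the first
time every index of `J` has been used. Before that time only a proper subfamily is visited, so the
induction hypothesis bounds the moments of this window. Innate regularity bounds `d` at the end
of the window by `K S`, where `S` is the length of the window, and Hölder gives
`S³ ≤ (∑ ‖Δx‖^{1/2})² ∑ ‖Δx‖²`. The induction hypothesis at exponent `1/2` and Fejér monotonicity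
then give `d³ ≤ σ d(x_0)³` with a uniform `σ < 1`. So every sweep shrinks `d^γ` by a fixed factor
and the moments add up to a geometric series.
-/

open Metric

noncomputable def relaxProj {H : Type*} [NormedAddCommGroup H] [InnerProductSpace ℝ H]
    (V : Submodule ℝ H) [V.HasOrthogonalProjection] (l : ℝ) (x : H) : H :=
  (1 - l) • x + l • (V.orthogonalProjectionOnto x : H)

open Finset

section RelaxedProjection

variable {H : Type*} [NormedAddCommGroup H] [InnerProductSpace ℝ H]

instance Submodule.completeSpace_iInf [CompleteSpace H] {ι : Sort*} (V : ι → Submodule ℝ H)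
    [∀ j, CompleteSpace (V j)] : CompleteSpace (⨅ j, V j : Submodule ℝ H) := by
  have hV : IsClosed ((⨅ j, V j : Submodule ℝ H) : Set H) := by
    rw [Submodule.coe_iInf]
    exact isClosed_iInter fun j => (completeSpace_coe_iff_isComplete.1 inferInstance).isClosed
  exact hV.completeSpace_coe

variable (V : Submodule ℝ H) [V.HasOrthogonalProjection]

theorem Submodule.infDist_eq_norm_sub_starProjection (x : H) :
    infDist x (V : Set H) = ‖x - V.starProjection x‖ := by
  rw [infDist_eq_iInf, Submodule.starProjection_minimal]
  simp [dist_eq_norm]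

theorem relaxProj_eq_sub (l : ℝ) (x : H) :
    relaxProj V l x = x - l • (x - V.starProjection x) := by
  simp only [relaxProj, ← Submodule.starProjection_apply, sub_smul, one_smul, smul_sub]
  abel

theorem norm_relaxProj_sub_self {l : ℝ} (hl : 0 ≤ l) (x : H) :
    ‖relaxProj V l x - x‖ = l * infDist x (V : Set H) := by
  rw [relaxProj_eq_sub, sub_sub_cancel_left, norm_neg, norm_smul, Real.norm_of_nonneg hl,
    V.infDist_eq_norm_sub_starProjection]

variable {V}

theorem norm_relaxProj_sub_sq_add_le {η l : ℝ} (hη : 0 < η) (hl : l ∈ Set.Icc η (2 - η))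
    (x : H) {z : H} (hz : z ∈ V) :
    ‖relaxProj V l x - z‖ ^ 2 + η / 2 * ‖relaxProj V l x - x‖ ^ 2 ≤ ‖x - z‖ ^ 2 := by
  set f := x - V.starProjection x
  have hf : inner ℝ (x - z) f = ‖f‖ ^ 2 := by
    have horth : inner ℝ (V.starProjection x - z) f = 0 :=
      V.sub_starProjection_mem_orthogonal x _ (V.sub_mem (V.starProjection_apply_mem x) hz)
    calc inner ℝ (x - z) f = inner ℝ (f + (V.starProjection x - z)) f := by rw [sub_add_sub_cancel]
      _ = ‖f‖ ^ 2 := by rw [inner_add_left, horth, real_inner_self_eq_norm_sq, add_zero]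
  have hy : relaxProj V l x - z = (x - z) - l • f := by rw [relaxProj_eq_sub]; abel
  rw [hy, relaxProj_eq_sub, sub_sub_cancel_left, norm_neg, norm_sub_sq_real, inner_smul_right,
    hf, norm_smul, Real.norm_eq_abs, mul_pow, sq_abs]
  have hl0 : 0 ≤ l := hη.le.trans hl.1
  have hcoef : 0 ≤ 2 - l - η / 2 * l := by nlinarith [hl.1, hl.2]
  nlinarith [mul_nonneg (mul_nonneg hl0 (sq_nonneg ‖f‖)) hcoef]

theorem infDist_relaxProj_sq_add_le {W : Submodule ℝ H} [W.HasOrthogonalProjection] (hWV : W ≤ V)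
    {η l : ℝ} (hη : 0 < η) (hl : l ∈ Set.Icc η (2 - η)) (x : H) :
    infDist (relaxProj V l x) (W : Set H) ^ 2 + η / 2 * ‖relaxProj V l x - x‖ ^ 2
      ≤ infDist x (W : Set H) ^ 2 := by
  have hz : W.starProjection x ∈ W := W.starProjection_apply_mem x
  have hle : infDist (relaxProj V l x) (W : Set H) ≤ ‖relaxProj V l x - W.starProjection x‖ := by
    simpa [dist_eq_norm] using infDist_le_dist_of_mem (x := relaxProj V l x) hz
  rw [W.infDist_eq_norm_sub_starProjection x]
  nlinarith [norm_relaxProj_sub_sq_add_le hη hl x (hWV hz),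
    pow_le_pow_left₀ infDist_nonneg hle 2]

end RelaxedProjection

theorem sum_pow_three_le_sq_sum_sqrt_mul_sum_sq {ι : Type*} (s : Finset ι) {u : ι → ℝ}
    (hu : ∀ n ∈ s, 0 ≤ u n) :
    (∑ n ∈ s, u n) ^ 3 ≤ (∑ n ∈ s, √(u n)) ^ 2 * ∑ n ∈ s, u n ^ 2 := by
  set r := fun n => √(u n)
  have hr : ∀ n ∈ s, u n = r n ^ 2 := fun n hn => (Real.sq_sqrt (hu n hn)).symm
  have hr0 : ∀ n ∈ s, 0 ≤ r n := fun n _ => Real.sqrt_nonneg _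
  have hQ : ∑ n ∈ s, u n ^ 2 = ∑ n ∈ s, (r n ^ 2) ^ 2 := sum_congr rfl fun n hn => by rw [hr n hn]
  rw [sum_congr rfl hr, hQ]
  set S := ∑ n ∈ s, r n ^ 2
  set A := ∑ n ∈ s, r n
  set B := ∑ n ∈ s, r n ^ 3
  set Q := ∑ n ∈ s, (r n ^ 2) ^ 2
  have hSB : S ^ 2 ≤ A * B := sum_sq_le_sum_mul_sum_of_sq_le_mul s hr0
    (fun n hn => pow_nonneg (hr0 n hn) 3) fun n _ => by ring_nf; rfl
  have hBQ : B ^ 2 ≤ S * Q := sum_sq_le_sum_mul_sum_of_sq_le_mul s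
    (fun n _ => sq_nonneg (r n)) (fun n _ => sq_nonneg _) fun n _ => by ring_nf; rfl
  have hS : 0 ≤ S := sum_nonneg fun n _ => sq_nonneg (r n)
  rcases hS.eq_or_lt with hS0 | hSpos
  · rw [← hS0, zero_pow three_ne_zero]
    exact mul_nonneg (sq_nonneg A) (sum_nonneg fun n _ => sq_nonneg _)
  refine le_of_mul_le_mul_left ?_ hSpos
  calc S * S ^ 3 = (S ^ 2) ^ 2 := by ring
    _ ≤ (A * B) ^ 2 := pow_le_pow_left₀ (sq_nonneg S) hSB 2
    _ = A ^ 2 * B ^ 2 := by ring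
    _ ≤ A ^ 2 * (S * Q) := mul_le_mul_of_nonneg_left hBQ (sq_nonneg A)
    _ = S * (A ^ 2 * Q) := by ring

noncomputable def sweepFactor (K c η : ℝ) : ℝ :=
  2 * K ^ 3 * c / η / (1 + 2 * K ^ 3 * c / η)

theorem sweepFactor_nonneg {K c η : ℝ} (hK : 0 ≤ K) (hc : 0 ≤ c) (hη : 0 < η) :
    0 ≤ sweepFactor K c η := by
  unfold sweepFactor; positivity

theorem sweepFactor_lt_one {K c η : ℝ} (hK : 0 ≤ K) (hc : 0 ≤ c) (hη : 0 < η) :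
    sweepFactor K c η < 1 := by
  unfold sweepFactor
  rw [div_lt_one (by positivity)]
  linarith

theorem pow_three_le_sweepFactor_mul {d₀ d₁ S A Q K c η : ℝ} (hη : 0 < η) (hK : 0 ≤ K)
    (hc : 0 ≤ c) (hd₁ : 0 ≤ d₁) (hd : d₁ ≤ d₀) (hQ0 : 0 ≤ Q) (hdS : d₁ ≤ K * S)
    (hS : S ^ 3 ≤ A ^ 2 * Q) (hA : A ^ 2 ≤ c * d₀) (hQ : d₁ ^ 2 + η / 2 * Q ≤ d₀ ^ 2) :
    d₁ ^ 3 ≤ sweepFactor K c η * d₀ ^ 3 := by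
  have hcubic : d₁ ^ 3 ≤ K ^ 3 * (c * d₀) * Q :=
    calc d₁ ^ 3 ≤ (K * S) ^ 3 := pow_le_pow_left₀ hd₁ hdS 3
      _ = K ^ 3 * S ^ 3 := by ring
      _ ≤ K ^ 3 * (A ^ 2 * Q) := by gcongr
      _ ≤ K ^ 3 * (c * d₀ * Q) := by gcongr
      _ = K ^ 3 * (c * d₀) * Q := by ring
  have hKc : 0 ≤ K ^ 3 * (c * d₀) := by have := hd₁.trans hd; positivity
  -- `η d₁³ ≤ 2 K³ c d₀ (d₀² - d₁²) ≤ 2 K³ c (d₀³ - d₁³)`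
  have key : η * d₁ ^ 3 + 2 * K ^ 3 * c * d₁ ^ 3 ≤ 2 * K ^ 3 * c * d₀ ^ 3 := by
    nlinarith [mul_le_mul_of_nonneg_left hcubic hη.le, mul_le_mul_of_nonneg_left hQ hKc,
      mul_le_mul_of_nonneg_left (mul_le_mul_of_nonneg_right hd (sq_nonneg d₁))
        (by positivity : 0 ≤ K ^ 3 * c)]
  unfold sweepFactor
  rw [div_mul_eq_mul_div, le_div_iff₀ (by positivity)]
  field_simp
  linarith

theorem rpow_le_rpow_mul_of_pow_three_le {a b σ γ : ℝ} (ha : 0 ≤ a) (hb : 0 ≤ b) (hσ : 0 ≤ σ)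
    (hγ : 0 ≤ γ) (h : a ^ 3 ≤ σ * b ^ 3) : a ^ γ ≤ σ ^ (γ / 3) * b ^ γ := by
  have hcube : ∀ y : ℝ, 0 ≤ y → y ^ γ = (y ^ 3) ^ (γ / 3) := fun y hy => by
    rw [← Real.rpow_natCast_mul hy]; congr 1; push_cast; ring
  rw [hcube a ha, hcube b hb, ← Real.mul_rpow hσ (by positivity)]
  exact Real.rpow_le_rpow (by positivity) h (by positivity)

theorem exists_lt_image_range_ssubset {ι : Type*} [DecidableEq ι] (i : ℕ → ι) {T : ℕ}
    (hT : 0 < T) : ∃ t < T, (range t).image i ⊂ (range T).image i ∧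
      (range (t + 1)).image i = (range T).image i := by
  induction T with
  | zero => omega
  | succ T ih =>
    by_cases h : (range T).image i = (range (T + 1)).image i
    · obtain ⟨t, htT, hsub, heq⟩ := ih (Nat.pos_of_ne_zero fun hT0 => by simp [hT0] at h)
      exact ⟨t, by omega, h ▸ hsub, h ▸ heq⟩
    · exact ⟨T, by omega,
        ssubset_of_subset_of_ne (image_subset_image (range_subset_range.2 T.le_succ)) h, rfl⟩

section Trajectory

variable {H : Type*} [NormedAddCommGroup H] [InnerProductSpace ℝ H]
variable {ι : Type*} (V : ι → Submodule ℝ H)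

-- Innate regularity with one constant for all `I`; `r` is any bound for `max_{j ∈ I} d(y, V j)`.
def IsRegularWith (κ : ℝ) : Prop :=
  ∀ I : Finset ι, I.Nonempty → ∀ (y : H) (r : ℝ), (∀ j ∈ I, infDist y (V j : Set H) ≤ r) →
    infDist y ((⨅ j ∈ I, V j : Submodule ℝ H) : Set H) ≤ κ * r

theorem exists_isRegularWith [Finite ι]
    (hreg : ∀ (I : Finset ι) (hI : I.Nonempty), ∃ κ : ℝ, ∀ y : H,
      infDist y ((⨅ j ∈ I, V j : Submodule ℝ H) : Set H) ≤
        κ * I.sup' hI fun j => infDist y (V j : Set H)) :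
    ∃ κ, 0 ≤ κ ∧ IsRegularWith V κ := by
  choose κ hκ using hreg
  obtain ⟨M, hM⟩ :=
    Finite.exists_le fun I : Finset ι => if hI : I.Nonempty then κ I hI else 0
  refine ⟨max M 0, le_max_right _ _, fun I hI y r hr => ?_⟩
  have hsup : 0 ≤ I.sup' hI fun j => infDist y (V j : Set H) :=
    infDist_nonneg.trans (le_sup' (fun j => infDist y (V j : Set H)) hI.choose_spec)
  have hκM : κ I hI ≤ max M 0 := by simpa [hI] using (hM I).trans (le_max_left M 0)
  calc infDist y _ ≤ κ I hI * I.sup' hI fun j => infDist y (V j : Set H) := hκ I hI y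
    _ ≤ max M 0 * I.sup' hI fun j => infDist y (V j : Set H) :=
        mul_le_mul_of_nonneg_right hκM hsup
    _ ≤ max M 0 * r := mul_le_mul_of_nonneg_left (sup'_le _ _ hr) (le_max_right _ _)

variable [∀ j, (V j).HasOrthogonalProjection]

def IsRelaxedTrajectory (η : ℝ) (i : ℕ → ι) (x : ℕ → H) : Prop :=
  ∀ n, ∃ l ∈ Set.Icc η (2 - η), x (n + 1) = relaxProj (V (i n)) l (x n)

variable {V} {η : ℝ} {i : ℕ → ι} {x : ℕ → H}

namespace IsRelaxedTrajectory

theorem shift (hx : IsRelaxedTrajectory V η i x) (t : ℕ) :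
    IsRelaxedTrajectory V η (fun n => i (t + n)) (fun n => x (t + n)) :=
  fun n => hx (t + n)

theorem mul_infDist_le_norm_sub (hx : IsRelaxedTrajectory V η i x) (hη : 0 ≤ η) (n : ℕ) :
    η * infDist (x n) (V (i n) : Set H) ≤ ‖x (n + 1) - x n‖ := by
  obtain ⟨l, hl, hxn⟩ := hx n
  rw [hxn, norm_relaxProj_sub_self _ (hη.trans hl.1)]
  exact mul_le_mul_of_nonneg_right hl.1 infDist_nonneg

theorem norm_sub_le_two_mul_infDist (hx : IsRelaxedTrajectory V η i x) (hη : 0 ≤ η) (n : ℕ) :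
    ‖x (n + 1) - x n‖ ≤ 2 * infDist (x n) (V (i n) : Set H) := by
  obtain ⟨l, hl, hxn⟩ := hx n
  rw [hxn, norm_relaxProj_sub_self _ (hη.trans hl.1)]
  exact mul_le_mul_of_nonneg_right (by linarith [hl.2]) infDist_nonneg

theorem infDist_le_of_sweep [DecidableEq ι] {κ : ℝ} (hx : IsRelaxedTrajectory V η i x)
    (hη : 0 < η) (hreg : IsRegularWith V κ) (t : ℕ) :
    infDist (x t) ((⨅ j ∈ (range (t + 1)).image i, V j : Submodule ℝ H) : Set H) ≤
      κ * (1 + 1 / η) * ∑ n ∈ range (t + 1), ‖x (n + 1) - x n‖ := by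
  set S := ∑ n ∈ range (t + 1), ‖x (n + 1) - x n‖
  rw [mul_assoc]
  refine hreg _ (by simp) (x t) _ ?_
  simp only [mem_image, mem_range]
  rintro _ ⟨s, hs, rfl⟩
  have hstep : ‖x (s + 1) - x s‖ ≤ S :=
    single_le_sum (fun n _ => norm_nonneg (x (n + 1) - x n)) (mem_range.2 hs)
  have htravel : dist (x t) (x s) ≤ S := by
    have h := dist_le_Ico_sum_dist x (Nat.lt_succ_iff.1 hs)
    simp only [dist_eq_norm'] at h
    rw [dist_comm, dist_eq_norm']
    refine h.trans (sum_le_sum_of_subset_of_nonneg (fun n hn => ?_) fun n _ _ => norm_nonneg _)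
    exact mem_range.2 (by have := (mem_Ico.1 hn).2; omega)
  have hdist : infDist (x s) (V (i s) : Set H) ≤ S / η := by
    rw [le_div_iff₀ hη, mul_comm]
    exact (hx.mul_infDist_le_norm_sub hη.le s).trans hstep
  calc infDist (x t) (V (i s) : Set H) ≤ infDist (x s) (V (i s) : Set H) + dist (x t) (x s) :=
        infDist_le_infDist_add_dist
    _ ≤ S / η + S := add_le_add hdist htravel
    _ = (1 + 1 / η) * S := by ring

variable {W : Submodule ℝ H} [W.HasOrthogonalProjection] {T : ℕ}

theorem infDist_sq_add_le (hx : IsRelaxedTrajectory V η i x)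
    (hW : ∀ n < T, W ≤ V (i n)) (hη : 0 < η) {n : ℕ} (hn : n < T) :
    infDist (x (n + 1)) (W : Set H) ^ 2 + η / 2 * ‖x (n + 1) - x n‖ ^ 2
      ≤ infDist (x n) (W : Set H) ^ 2 := by
  obtain ⟨l, hl, hxn⟩ := hx n
  rw [hxn]
  exact infDist_relaxProj_sq_add_le (hW n hn) hη hl (x n)

theorem infDist_sq_add_sum_le (hx : IsRelaxedTrajectory V η i x)
    (hW : ∀ n < T, W ≤ V (i n)) (hη : 0 < η) {t : ℕ} (ht : t ≤ T) :
    infDist (x t) (W : Set H) ^ 2 + η / 2 * ∑ n ∈ range t, ‖x (n + 1) - x n‖ ^ 2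
      ≤ infDist (x 0) (W : Set H) ^ 2 := by
  induction t with
  | zero => simp
  | succ t ih =>
    rw [sum_range_succ]
    linarith [hx.infDist_sq_add_le hW hη (n := t) (by omega), ih (by omega)]

theorem infDist_le_infDist_of_le (hx : IsRelaxedTrajectory V η i x)
    (hW : ∀ n < T, W ≤ V (i n)) (hη : 0 < η) {s t : ℕ} (hst : s ≤ t) (ht : t ≤ T) :
    infDist (x t) (W : Set H) ≤ infDist (x s) (W : Set H) := by
  induction t, hst using Nat.le_induction with
  | base => rfl
  | succ t hst ih =>
    refine le_trans ?_ (ih (by omega))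
    refine (pow_le_pow_iff_left₀ infDist_nonneg infDist_nonneg two_ne_zero).1 ?_
    nlinarith [hx.infDist_sq_add_le hW hη (n := t) (by omega), sq_nonneg ‖x (t + 1) - x t‖]

theorem norm_sub_le_two_mul_infDist_zero (hx : IsRelaxedTrajectory V η i x)
    (hW : ∀ n < T, W ≤ V (i n)) (hη : 0 < η) {n : ℕ} (hn : n < T) :
    ‖x (n + 1) - x n‖ ≤ 2 * infDist (x 0) (W : Set H) := by
  calc ‖x (n + 1) - x n‖ ≤ 2 * infDist (x n) (V (i n) : Set H) :=
        hx.norm_sub_le_two_mul_infDist hη.le n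
    _ ≤ 2 * infDist (x 0) (W : Set H) := by
        gcongr
        exact (infDist_le_infDist_of_subset (hW n hn) ⟨0, W.zero_mem⟩).trans
          (hx.infDist_le_infDist_of_le hW hη (Nat.zero_le n) hn.le)

end IsRelaxedTrajectory

end Trajectory

section Moments

variable {H : Type*} [NormedAddCommGroup H] [InnerProductSpace ℝ H]
variable {ι : Type*}

def MomentBound (V : ι → Submodule ℝ H) [∀ j, CompleteSpace (V j)] (η : ℝ) (m : ℕ)
    (γ C : ℝ) : Prop :=
  ∀ J : Finset ι, #J ≤ m → ∀ (i : ℕ → ι) (x : ℕ → H), IsRelaxedTrajectory V η i x →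
    ∀ T : ℕ, (∀ n < T, i n ∈ J) →
      ∑ n ∈ range T, ‖x (n + 1) - x n‖ ^ γ ≤
        C * infDist (x 0) ((⨅ j ∈ J, V j : Submodule ℝ H) : Set H) ^ γ

variable {V : ι → Submodule ℝ H} [∀ j, CompleteSpace (V j)]
variable {η κ γ C C₀ : ℝ} {m : ℕ} {i : ℕ → ι} {x : ℕ → H}

theorem momentBound_zero (γ : ℝ) : MomentBound V η 0 γ 0 := by
  intro J hJ i x _ T hiJ
  obtain rfl : J = ∅ := card_eq_zero.1 (Nat.le_zero.1 hJ)
  cases T with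
  | zero => simp
  | succ T => exact absurd (hiJ 0 T.succ_pos) (notMem_empty _)

theorem MomentBound.le_of_subset (h : MomentBound V η m γ C) (hC : 0 ≤ C) (hγ : 0 ≤ γ)
    {J' J : Finset ι} (hJ' : J' ⊆ J) (hcard : #J' ≤ m) (hx : IsRelaxedTrajectory V η i x)
    {T : ℕ} (hi : ∀ n < T, i n ∈ J') :
    ∑ n ∈ range T, ‖x (n + 1) - x n‖ ^ γ ≤
      C * infDist (x 0) ((⨅ j ∈ J, V j : Submodule ℝ H) : Set H) ^ γ := by
  have hVJ : (⨅ j ∈ J, V j : Submodule ℝ H) ≤ ⨅ j ∈ J', V j :=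
    le_iInf₂ fun j hj => iInf₂_le j (hJ' hj)
  refine (h J' hcard i x hx T hi).trans (mul_le_mul_of_nonneg_left ?_ hC)
  exact Real.rpow_le_rpow infDist_nonneg
    (infDist_le_infDist_of_subset (SetLike.coe_subset_coe.2 hVJ) ⟨0, Submodule.zero_mem _⟩) hγ

variable [DecidableEq ι] [CompleteSpace H]

theorem MomentBound.sum_range_succ_le (h : MomentBound V η m γ C) (hC : 0 ≤ C) (hγ : 0 ≤ γ)
    (hη : 0 < η) (hx : IsRelaxedTrajectory V η i x) {t : ℕ} (hcard : #((range t).image i) ≤ m) :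
    ∑ n ∈ range (t + 1), ‖x (n + 1) - x n‖ ^ γ ≤ (C + 2 ^ γ) *
      infDist (x 0) ((⨅ j ∈ (range (t + 1)).image i, V j : Submodule ℝ H) : Set H) ^ γ := by
  have hW : ∀ n < t + 1, (⨅ j ∈ (range (t + 1)).image i, V j : Submodule ℝ H) ≤ V (i n) :=
    fun n hn => iInf₂_le (i n) (mem_image_of_mem i (mem_range.2 hn))
  rw [sum_range_succ, add_mul]
  gcongr
  · exact h.le_of_subset hC hγ (image_subset_image (range_subset_range.2 t.le_succ)) hcard hx
      fun n hn => mem_image_of_mem i (mem_range.2 hn)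
  · calc ‖x (t + 1) - x t‖ ^ γ ≤ (2 * infDist (x 0) _) ^ γ :=
          Real.rpow_le_rpow (norm_nonneg _)
            (hx.norm_sub_le_two_mul_infDist_zero hW hη t.lt_succ_self) hγ
      _ = 2 ^ γ * _ := Real.mul_rpow zero_le_two infDist_nonneg

theorem MomentBound.pow_three_infDist_le (hhalf : MomentBound V η m (1 / 2) C₀) (hC₀ : 0 ≤ C₀)
    (hη : 0 < η) (hκ : 0 ≤ κ) (hreg : IsRegularWith V κ) (hx : IsRelaxedTrajectory V η i x)
    {t : ℕ} (hcard : #((range t).image i) ≤ m) :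
    infDist (x (t + 1)) ((⨅ j ∈ (range (t + 1)).image i, V j : Submodule ℝ H) : Set H) ^ 3 ≤
      sweepFactor (κ * (1 + 1 / η)) ((C₀ + √2) ^ 2) η *
        infDist (x 0) ((⨅ j ∈ (range (t + 1)).image i, V j : Submodule ℝ H) : Set H) ^ 3 := by
  set W := (⨅ j ∈ (range (t + 1)).image i, V j : Submodule ℝ H)
  have hW : ∀ n < t + 1, W ≤ V (i n) :=
    fun n hn => iInf₂_le (i n) (mem_image_of_mem i (mem_range.2 hn))
  have hsqrt := hhalf.sum_range_succ_le hC₀ (by norm_num) hη hx hcard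
  simp only [← Real.sqrt_eq_rpow] at hsqrt
  refine pow_three_le_sweepFactor_mul hη (by positivity) (sq_nonneg _) infDist_nonneg
    (hx.infDist_le_infDist_of_le hW hη (Nat.zero_le _) le_rfl) (sum_nonneg fun n _ => sq_nonneg _)
    ((hx.infDist_le_infDist_of_le hW hη t.le_succ le_rfl).trans (hx.infDist_le_of_sweep hη hreg t))
    (sum_pow_three_le_sq_sum_sqrt_mul_sum_sq _ fun n _ => norm_nonneg _) ?_
    (hx.infDist_sq_add_sum_le hW hη le_rfl)
  calc (∑ n ∈ range (t + 1), √‖x (n + 1) - x n‖) ^ 2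
      ≤ ((C₀ + √2) * √(infDist (x 0) (W : Set H))) ^ 2 :=
        pow_le_pow_left₀ (sum_nonneg fun n _ => Real.sqrt_nonneg _) hsqrt 2
    _ = (C₀ + √2) ^ 2 * infDist (x 0) (W : Set H) := by
        rw [mul_pow, Real.sq_sqrt infDist_nonneg]

theorem MomentBound.succ (hη : 0 < η) (hκ : 0 ≤ κ) (hreg : IsRegularWith V κ)
    (hhalf : MomentBound V η m (1 / 2) C₀) (hC₀ : 0 ≤ C₀) (h : MomentBound V η m γ C)
    (hC : 0 ≤ C) (hγ : 0 < γ) : ∃ C' ≥ 0, MomentBound V η (m + 1) γ C' := by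
  have hK : 0 ≤ κ * (1 + 1 / η) := mul_nonneg hκ (by positivity)
  set σ := sweepFactor (κ * (1 + 1 / η)) ((C₀ + √2) ^ 2) η
  have hσ0 : 0 ≤ σ := sweepFactor_nonneg hK (sq_nonneg _) hη
  have hρ : σ ^ (γ / 3) < 1 :=
    Real.rpow_lt_one hσ0 (sweepFactor_lt_one hK (sq_nonneg _) hη) (by positivity)
  set C' := max C ((C + 2 ^ γ) / (1 - σ ^ (γ / 3)))
  -- a sweep costs at most `C + 2 ^ γ` and shrinks the remaining budget by `σ ^ (γ / 3)`
  have hC' : C + 2 ^ γ + C' * σ ^ (γ / 3) ≤ C' := by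
    have := le_max_right C ((C + 2 ^ γ) / (1 - σ ^ (γ / 3)))
    rw [div_le_iff₀ (sub_pos.2 hρ)] at this
    linarith
  have hC'0 : 0 ≤ C' := hC.trans (le_max_left _ _)
  refine ⟨C', hC'0, fun J hJ i x hx T => ?_⟩
  induction T using Nat.strong_induction_on generalizing i x with
  | _ T ih =>
  intro hiJ
  have hJ₀ : (range T).image i ⊆ J := fun j hj => by
    obtain ⟨n, hn, rfl⟩ := mem_image.1 hj
    exact hiJ n (mem_range.1 hn)
  have hproper : ∀ J' ⊆ J, J' ≠ J → #J' ≤ m := fun J' hsub hne => by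
    have := card_lt_card (ssubset_of_subset_of_ne hsub hne); omega
  by_cases hsweep : (range T).image i = J
  swap
  · exact (h.le_of_subset hC hγ.le hJ₀ (hproper _ hJ₀ hsweep) hx fun n hn =>
      mem_image_of_mem i (mem_range.2 hn)).trans
      (mul_le_mul_of_nonneg_right (le_max_left _ _) (Real.rpow_nonneg infDist_nonneg γ))
  rcases Nat.eq_zero_or_pos T with rfl | hT
  · simp only [range_zero, sum_empty]
    exact mul_nonneg hC'0 (Real.rpow_nonneg infDist_nonneg γ)
  obtain ⟨t, htT, hfirst, hfull⟩ := exists_lt_image_range_ssubset i hT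
  rw [hsweep] at hfirst hfull
  have hcard : #((range t).image i) ≤ m := hproper _ hfirst.subset hfirst.ne
  have hwindow := h.sum_range_succ_le hC hγ.le hη hx hcard
  have hdecay := rpow_le_rpow_mul_of_pow_three_le infDist_nonneg infDist_nonneg hσ0 hγ.le
    (hhalf.pow_three_infDist_le hC₀ hη hκ hreg hx hcard)
  rw [hfull] at hwindow hdecay
  obtain ⟨k, rfl⟩ : ∃ k, T = t + 1 + k := ⟨T - (t + 1), by omega⟩
  have htail := ih k (by omega) _ _ (hx.shift (t + 1)) fun n hn => hiJ _ (by omega)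
  rw [sum_range_add]
  calc _ ≤ (C + 2 ^ γ) * infDist (x 0) _ ^ γ + C' * infDist (x (t + 1)) _ ^ γ :=
        add_le_add hwindow htail
    _ ≤ (C + 2 ^ γ) * infDist (x 0) _ ^ γ + C' * (σ ^ (γ / 3) * infDist (x 0) _ ^ γ) := by
        gcongr
    _ ≤ C' * infDist (x 0) _ ^ γ := by
        nlinarith [Real.rpow_nonneg (infDist_nonneg (x := x 0)
          (s := ((⨅ j ∈ J, V j : Submodule ℝ H) : Set H))) γ]

theorem exists_momentBound (hη : 0 < η) (hκ : 0 ≤ κ) (hreg : IsRegularWith V κ) (m : ℕ) :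
    ∀ γ, 0 < γ → ∃ C ≥ 0, MomentBound V η m γ C := by
  induction m with
  | zero => exact fun γ _ => ⟨0, le_rfl, momentBound_zero γ⟩
  | succ m ih =>
    intro γ hγ
    obtain ⟨C₀, hC₀, hhalf⟩ := ih (1 / 2) (by norm_num)
    obtain ⟨C, hC, h⟩ := ih γ hγ
    exact MomentBound.succ hη hκ hreg hhalf hC₀ h hC hγ

end Moments

theorem stmt_0_general {H : Type*} [NormedAddCommGroup H] [InnerProductSpace ℝ H] [CompleteSpace H]
    (N : ℕ) (V : Fin N → Submodule ℝ H) [∀ i, CompleteSpace (V i)]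
    (hreg : ∀ (I : Finset (Fin N)) (hI : I.Nonempty), ∃ κ : ℝ,
      ∀ x : H, infDist x ((⨅ i ∈ I, V i : Submodule ℝ H) : Set H) ≤
        κ * I.sup' hI (fun i => infDist x (V i : Set H)))
    (η γ : ℝ) (hη : η ∈ Set.Ioc (0 : ℝ) 1) (hγ : 0 < γ) :
    ∃ C : ℝ, ∀ (i : ℕ → Fin N) (lam : ℕ → ℝ),
      (∀ n, lam n ∈ Set.Icc η (2 - η)) →
      ∀ x : ℕ → H, (∀ n, x (n + 1) = relaxProj (V (i n)) (lam n) (x n)) →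
        Summable (fun n => ‖x (n + 1) - x n‖ ^ γ) ∧
        ∑' n, ‖x (n + 1) - x n‖ ^ γ ≤ C * ‖x 0‖ ^ γ := by
  obtain ⟨κ, hκ, hκreg⟩ := exists_isRegularWith V hreg
  obtain ⟨C, hC, hbound⟩ := exists_momentBound hη.1 hκ hκreg N γ hγ
  refine ⟨C, fun i lam hlam x htraj => ?_⟩
  have hx : IsRelaxedTrajectory V η i x := fun n => ⟨lam n, hlam n, htraj n⟩
  have hpartial (T : ℕ) : ∑ n ∈ range T, ‖x (n + 1) - x n‖ ^ γ ≤ C * ‖x 0‖ ^ γ := by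
    have hdist : infDist (x 0) ((⨅ j ∈ (univ : Finset (Fin N)), V j : Submodule ℝ H) : Set H)
        ≤ ‖x 0‖ := by
      simpa using infDist_le_dist_of_mem (x := x 0)
        (Submodule.zero_mem (⨅ j ∈ (univ : Finset (Fin N)), V j : Submodule ℝ H))
    exact (hbound univ (by simp) i x hx T fun n _ => mem_univ _).trans
      (mul_le_mul_of_nonneg_left (Real.rpow_le_rpow infDist_nonneg hdist hγ.le) hC)
  have hnonneg (n : ℕ) : 0 ≤ ‖x (n + 1) - x n‖ ^ γ := Real.rpow_nonneg (norm_nonneg _) γ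
  exact ⟨summable_of_sum_range_le hnonneg hpartial, Real.tsum_le_of_sum_range_le hnonneg hpartial⟩

/-- Under innate regularity, all trajectories of unrestricted relaxed
projections have uniformly bounded `γ`-moments of displacements. -/
theorem stmt_0 {H : Type*} [NormedAddCommGroup H] [InnerProductSpace ℝ H] [CompleteSpace H]
    (N : ℕ) (hN : 1 ≤ N) (V : Fin N → Submodule ℝ H) [∀ i, CompleteSpace (V i)]
    (hreg : ∀ (I : Finset (Fin N)) (hI : I.Nonempty), ∃ κ : ℝ,
      ∀ x : H, infDist x ((⨅ i ∈ I, V i : Submodule ℝ H) : Set H) ≤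
        κ * I.sup' hI (fun i => infDist x (V i : Set H)))
    (η γ : ℝ) (hη : η ∈ Set.Ioc (0 : ℝ) 1) (hγ : 0 < γ) :
    ∃ C : ℝ, ∀ (i : ℕ → Fin N) (lam : ℕ → ℝ),
      (∀ n, lam n ∈ Set.Icc η (2 - η)) →
      ∀ x : ℕ → H, (∀ n, x (n + 1) = relaxProj (V (i n)) (lam n) (x n)) →
        Summable (fun n => ‖x (n + 1) - x n‖ ^ γ) ∧
        ∑' n, ‖x (n + 1) - x n‖ ^ γ ≤ C * ‖x 0‖ ^ γ :=
  stmt_0_general N V hreg η γ hη hγ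
end

section
/- Let H be a real Hilbert space and let (V_1,…,V_N) be an innately regular collection of closed linear subspaces of H. Let η ∈ (0,1]. Then for every initial point x_0 ∈ H, every control sequence (i_n)_{n≥0} with i_n ∈ {1,…,N}, and every sequence of relaxation coefficients (λ_n)_{n≥0} with λ_n ∈ [η, 2−η], the trajectory defined by x_{n+1} := P_{i_n,λ_n}(x_n) satisfies ∑_{n=0}^∞ ‖x_{n+1} − x_n‖ < ∞; in particular, the sequence (x_n) converges in norm to a limit in H. -/
/-!
A relaxed projection onto `V j` moves `x` by `λ d(x, V j)` and, for every `I ∋ j`, lowers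
`d(x, V_I)²` by at least `η d(x, V j)²`. By induction on `k`, the length of any stretch of the
trajectory that uses at most `k` of the sets is bounded by a constant times its largest step
distance `d(x n, V (i n))`. For a stretch using the `k + 1` sets of `I`, cut it at the first time
`T` by which every index of `I` has occurred: before `T` at most `k` sets are used, so the
distance to every `V j`, `j ∈ I`, stays comparable to the largest step distance `δ` up to `T`,
and innate regularity gives `d(x a, V_I) ≲ δ`. The Fejér inequality at that largest step then
contracts `d(·, V_I)` by a fixed factor `q < 1` per such cycle, and a geometric series bounds the
length of the stretch by a multiple of `d(x a, V_I)`, hence of its largest step distance.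
-/

open Metric Filter

open Finset RealInnerProductSpace

section RelaxedProjection

variable {H : Type*} [NormedAddCommGroup H] [InnerProductSpace ℝ H]

theorem Submodule.infDist_eq_norm_sub_starProjection_s1 (K : Submodule ℝ H)
    [K.HasOrthogonalProjection] (v : H) : infDist v K = ‖v - K.starProjection v‖ := by
  rw [starProjection_minimal, infDist_eq_iInf]
  simp only [dist_eq_norm]
  rfl

theorem relaxProj_sub_self (K : Submodule ℝ H) [K.HasOrthogonalProjection] (l : ℝ) (v : H) :
    relaxProj K l v - v = l • (K.starProjection v - v) := by
  rw [relaxProj, ← Submodule.starProjection_apply]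
  module

theorem norm_relaxProj_sub_self_s1 (K : Submodule ℝ H) [K.HasOrthogonalProjection] (l : ℝ)
    (v : H) : ‖relaxProj K l v - v‖ = |l| * infDist v K := by
  rw [relaxProj_sub_self, norm_smul, Real.norm_eq_abs, norm_sub_rev,
    K.infDist_eq_norm_sub_starProjection_s1]

theorem norm_relaxProj_sub_sq (K : Submodule ℝ H) [K.HasOrthogonalProjection] (l : ℝ)
    (v : H) {z : H} (hz : z ∈ K) :
    ‖relaxProj K l v - z‖ ^ 2 = ‖v - z‖ ^ 2 - l * (2 - l) * infDist v K ^ 2 := by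
  set p := K.starProjection v
  have horth : ⟪v - p, p - z⟫ = 0 :=
    K.starProjection_inner_eq_zero v _ (K.sub_mem (K.starProjection_apply_mem v) hz)
  have h₁ : relaxProj K l v - z = (1 - l) • (v - p) + (p - z) := by
    rw [relaxProj, ← Submodule.starProjection_apply]
    module
  have h₂ : v - z = (v - p) + (p - z) := by abel
  rw [h₁, h₂, norm_add_sq_real, norm_add_sq_real, inner_smul_left, horth, norm_smul,
    K.infDist_eq_norm_sub_starProjection_s1, Real.norm_eq_abs, mul_pow, sq_abs]
  simp only [conj_trivial]
  ring

theorem infDist_relaxProj_sq_le {K W : Submodule ℝ H} [K.HasOrthogonalProjection]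
    [W.HasOrthogonalProjection] (hWK : W ≤ K) (l : ℝ) (v : H) :
    infDist (relaxProj K l v) W ^ 2 ≤ infDist v W ^ 2 - l * (2 - l) * infDist v K ^ 2 := by
  have hp : W.starProjection v ∈ W := W.starProjection_apply_mem v
  calc infDist (relaxProj K l v) W ^ 2 ≤ ‖relaxProj K l v - W.starProjection v‖ ^ 2 := by
        gcongr
        · exact infDist_nonneg
        · exact dist_eq_norm (relaxProj K l v) _ ▸ infDist_le_dist_of_mem hp
    _ = infDist v W ^ 2 - l * (2 - l) * infDist v K ^ 2 := by
        rw [norm_relaxProj_sub_sq K l v (hWK hp), W.infDist_eq_norm_sub_starProjection_s1]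

theorem Submodule.completeSpace_biInf [CompleteSpace H] {ι : Type*} (V : ι → Submodule ℝ H)
    [∀ i, CompleteSpace (V i)] (I : Finset ι) : CompleteSpace (⨅ i ∈ I, V i : Submodule ℝ H) := by
  refine IsClosed.completeSpace_coe (hs := ?_)
  simp only [Submodule.coe_iInf]
  exact isClosed_biInter fun i _ =>
    (completeSpace_coe_iff_isComplete (s := (V i : Set H)).1 inferInstance).isClosed

end RelaxedProjection

theorem sum_Ico_le_of_contraction {s D : ℕ → ℝ} {M q : ℝ} {a₀ b : ℕ} (hD : ∀ n, 0 ≤ D n)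
    (hM : 0 ≤ M) (hq₀ : 0 ≤ q) (hq₁ : q < 1)
    (hstep : ∀ a, a₀ ≤ a → ∑ n ∈ Ico a b, s n ≤ M * D a ∨
      ∃ T ∈ Ico a b, ∑ n ∈ Ico a (T + 1), s n ≤ M * D a ∧ D (T + 1) ≤ q * D a) :
    ∑ n ∈ Ico a₀ b, s n ≤ M / (1 - q) * D a₀ := by
  have hMq : M ≤ M / (1 - q) := le_div_self hM (by linarith) (by linarith)
  suffices ∀ L a, b - a = L → a₀ ≤ a → ∑ n ∈ Ico a b, s n ≤ M / (1 - q) * D a from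
    this _ a₀ rfl le_rfl
  intro L
  induction L using Nat.strong_induction_on with
  | _ L ih =>
    intro a hL ha
    rcases hstep a ha with hsum | ⟨T, hT, hsum, hdrop⟩
    · exact hsum.trans (mul_le_mul_of_nonneg_right hMq (hD a))
    · rw [mem_Ico] at hT
      have htail := ih (b - (T + 1)) (by omega) (T + 1) rfl (by omega)
      calc ∑ n ∈ Ico a b, s n = ∑ n ∈ Ico a (T + 1), s n + ∑ n ∈ Ico (T + 1) b, s n :=
            (sum_Ico_consecutive _ (by omega) (by omega)).symm
        _ ≤ M * D a + M / (1 - q) * (q * D a) := by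
            gcongr
            exact htail.trans (mul_le_mul_of_nonneg_left hdrop (hMq.trans' hM))
        _ = M / (1 - q) * D a := by
            field_simp [(by linarith : (1 - q) ≠ 0)]
            ring

theorem exists_mem_Ico_card_image_le_lt {ι : Type*} [DecidableEq ι] (i : ℕ → ι) {k a : ℕ} :
    ∀ {b}, k < #((Ico a b).image i) →
      ∃ T ∈ Ico a b, #((Ico a T).image i) ≤ k ∧ k < #((Ico a (T + 1)).image i)
  | 0, hk => by simp at hk
  | b + 1, hk => by
    by_cases hkb : k < #((Ico a b).image i)
    · obtain ⟨T, hT, hTk⟩ := exists_mem_Ico_card_image_le_lt i hkb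
      exact ⟨T, Ico_subset_Ico_right b.le_succ hT, hTk⟩
    · refine ⟨b, ?_, not_lt.1 hkb, hk⟩
      by_contra hb
      simp_all [Ico_eq_empty_of_le (show b + 1 ≤ a by simp at hb; omega)]

theorem exists_cover_time {ι : Type*} [DecidableEq ι] {i : ℕ → ι} {I : Finset ι} {k a b : ℕ}
    (hI : #I ≤ k + 1) (hctrl : ∀ n ∈ Ico a b, i n ∈ I) (hk : k < #((Ico a b).image i)) :
    ∃ T ∈ Ico a b, #((Ico a T).image i) ≤ k ∧ ∀ j ∈ I, ∃ t ∈ Icc a T, i t = j := by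
  obtain ⟨T, hT, hTk, hTk'⟩ := exists_mem_Ico_card_image_le_lt i hk
  refine ⟨T, hT, hTk, fun j hj => ?_⟩
  have hsub : (Ico a (T + 1)).image i ⊆ I := fun j hj => by
    obtain ⟨t, ht, rfl⟩ := mem_image.1 hj
    exact hctrl t (Ico_subset_Ico_right (mem_Ico.1 hT).2 ht)
  rw [← eq_of_subset_of_card_le hsub (by omega)] at hj
  obtain ⟨t, ht, rfl⟩ := mem_image.1 hj
  exact ⟨t, by simp only [mem_Ico, mem_Icc] at ht ⊢; omega, rfl⟩

/-- Abstraction of a trajectory of relaxed projections: `s n` is the length of its `n`-th step,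
`e j n` the distance from its `n`-th point to the `j`-th set and `D I n` the distance to the
intersection of the sets indexed by `I`. -/
structure IsRegularFejerSystem {ι : Type*} (κ η : ℝ) (i : ℕ → ι) (s : ℕ → ℝ)
    (e : ι → ℕ → ℝ) (D : Finset ι → ℕ → ℝ) : Prop where
  kappa_pos : 0 < κ
  eta_pos : 0 < η
  step_nonneg : ∀ n, 0 ≤ s n
  step_le : ∀ n, s n ≤ 2 * e (i n) n
  abs_sub_le : ∀ j n, |e j (n + 1) - e j n| ≤ s n
  inter_nonneg : ∀ I n, 0 ≤ D I n
  le_inter : ∀ I n, i n ∈ I → e (i n) n ≤ D I n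
  fejer : ∀ I n, i n ∈ I → D I (n + 1) ^ 2 ≤ D I n ^ 2 - η * e (i n) n ^ 2
  inter_le : ∀ I : Finset ι, I.Nonempty → ∀ n r, (∀ j ∈ I, e j n ≤ r) → D I n ≤ κ * r

def IsStepSumBound {ι : Type*} (i : ℕ → ι) (s : ℕ → ℝ) (e : ι → ℕ → ℝ) (k : ℕ) (C : ℝ) :
    Prop :=
  ∀ I : Finset ι, #I ≤ k → ∀ a b δ, 0 ≤ δ → (∀ n ∈ Ico a b, i n ∈ I) →
    (∀ n ∈ Ico a b, e (i n) n ≤ δ) → ∑ n ∈ Ico a b, s n ≤ C * δ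

namespace IsRegularFejerSystem

variable {ι : Type*} {κ η : ℝ} {i : ℕ → ι} {s : ℕ → ℝ} {e : ι → ℕ → ℝ}
  {D : Finset ι → ℕ → ℝ} {I : Finset ι} {a b : ℕ}

theorem abs_sub_le_sum (h : IsRegularFejerSystem κ η i s e D) (j : ι) {p t : ℕ}
    (hp : p ∈ Icc a b) (ht : t ∈ Icc a b) : |e j p - e j t| ≤ ∑ n ∈ Ico a b, s n := by
  wlog htp : t ≤ p generalizing p t
  · rw [abs_sub_comm]
    exact this ht hp (le_of_not_ge htp)
  rw [mem_Icc] at hp ht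
  calc |e j p - e j t| = dist (e j t) (e j p) := by rw [Real.dist_eq, abs_sub_comm]
    _ ≤ ∑ n ∈ Ico t p, dist (e j n) (e j (n + 1)) := dist_le_Ico_sum_dist _ htp
    _ ≤ ∑ n ∈ Ico t p, s n := by
        gcongr with n
        rw [Real.dist_eq, abs_sub_comm]
        exact h.abs_sub_le j n
    _ ≤ ∑ n ∈ Ico a b, s n :=
        sum_le_sum_of_subset_of_nonneg (Ico_subset_Ico ht.1 hp.2) fun n _ _ => h.step_nonneg n

theorem inter_le_inter (h : IsRegularFejerSystem κ η i s e D)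
    (hctrl : ∀ n ∈ Ico a b, i n ∈ I) {n : ℕ} (ha : a ≤ n) (hb : n ≤ b) : D I n ≤ D I a := by
  induction n, ha using Nat.le_induction with
  | base => exact le_rfl
  | succ n ha ih =>
    refine le_trans ?_ (ih (by omega))
    have hfejer := h.fejer I n (hctrl n (mem_Ico.2 ⟨ha, by omega⟩))
    refine (pow_le_pow_iff_left₀ (h.inter_nonneg I _) (h.inter_nonneg I n) two_ne_zero).1 ?_
    nlinarith [h.eta_pos, sq_nonneg (e (i n) n)]

theorem step_dist_le_inter (h : IsRegularFejerSystem κ η i s e D)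
    (hctrl : ∀ n ∈ Ico a b, i n ∈ I) {n : ℕ} (hn : n ∈ Ico a b) : e (i n) n ≤ D I a :=
  (h.le_inter I n (hctrl n hn)).trans
    (h.inter_le_inter hctrl (mem_Ico.1 hn).1 (mem_Ico.1 hn).2.le)

theorem step_dist_nonneg (h : IsRegularFejerSystem κ η i s e D) (n : ℕ) : 0 ≤ e (i n) n := by
  linarith [h.step_nonneg n, h.step_le n]

theorem inter_le_of_forall_visited (h : IsRegularFejerSystem κ η i s e D) {T p : ℕ} {δ : ℝ}
    (hI : I.Nonempty) (hvis : ∀ j ∈ I, ∃ t ∈ Icc a T, i t = j)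
    (hδ : ∀ n ∈ Icc a T, e (i n) n ≤ δ) (hp : p ∈ Icc a T) :
    D I p ≤ κ * (δ + ∑ n ∈ Ico a T, s n) := by
  refine h.inter_le I hI p _ fun j hj => ?_
  obtain ⟨t, ht, rfl⟩ := hvis j hj
  linarith [hδ t ht, le_abs_self (e (i t) p - e (i t) t), h.abs_sub_le_sum (i t) hp ht]

variable [DecidableEq ι] {k : ℕ} {C : ℝ}

theorem sum_le_or_exists_contraction (h : IsRegularFejerSystem κ η i s e D)
    (hC : IsStepSumBound i s e k C) (hC₀ : 0 ≤ C) (hI : #I ≤ k + 1)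
    (hctrl : ∀ n ∈ Ico a b, i n ∈ I) :
    ∑ n ∈ Ico a b, s n ≤ (C + 2) * D I a ∨ ∃ T ∈ Ico a b,
      ∑ n ∈ Ico a (T + 1), s n ≤ (C + 2) * D I a ∧
        D I (T + 1) ≤ √(1 - η / (κ * (1 + C)) ^ 2) * D I a := by
  have hDa := h.inter_nonneg I a
  by_cases hk : k < #((Ico a b).image i)
  swap
  · left
    refine (hC _ (not_lt.1 hk) a b _ hDa (fun n hn => mem_image_of_mem i hn)
      fun n hn => h.step_dist_le_inter hctrl hn).trans ?_
    gcongr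
    linarith
  right
  obtain ⟨T, hT, hTk, hvis⟩ := exists_cover_time hI hctrl hk
  obtain ⟨haT, hTb⟩ := mem_Ico.1 hT
  have hIT : Icc a T ⊆ Ico a b := Icc_subset_Ico_right hTb
  obtain ⟨m, hm, hmax⟩ :=
    (Icc a T).exists_max_image (fun n => e (i n) n) ⟨a, left_mem_Icc.2 haT⟩
  obtain ⟨ham, hmT⟩ := mem_Icc.1 hm
  have hDm : e (i m) m ≤ D I a := h.step_dist_le_inter hctrl (hIT hm)
  have hsum : ∑ n ∈ Ico a T, s n ≤ C * e (i m) m :=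
    hC _ hTk a T _ (h.step_dist_nonneg m) (fun n hn => mem_image_of_mem i hn)
      fun n hn => hmax n (Ico_subset_Icc_self hn)
  have hDa_le : D I a ≤ κ * (1 + C) * e (i m) m := by
    have hIne : I.Nonempty := ⟨i a, hctrl a (hIT (left_mem_Icc.2 haT))⟩
    have := h.inter_le_of_forall_visited hIne hvis hmax (left_mem_Icc.2 haT)
    nlinarith [h.kappa_pos]
  have hdrop : D I (T + 1) ^ 2 ≤ D I a ^ 2 - η * e (i m) m ^ 2 := by
    have h₁ : D I (T + 1) ≤ D I (m + 1) :=
      h.inter_le_inter (fun n hn => hctrl n (Ico_subset_Ico_left (by omega) hn)) (by omega) hTb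
    have h₂ : D I m ≤ D I a := h.inter_le_inter hctrl ham (by omega)
    linarith [h.fejer I m (hctrl m (hIT hm)), pow_le_pow_left₀ (h.inter_nonneg I _) h₁ 2,
      pow_le_pow_left₀ (h.inter_nonneg I _) h₂ 2]
  refine ⟨T, hT, ?_, ?_⟩
  · rw [sum_Ico_succ_top haT]
    linarith [h.step_le T, h.step_dist_le_inter hctrl hT, mul_le_mul_of_nonneg_left hDm hC₀]
  · have hκC : 0 < κ * (1 + C) := by nlinarith [h.kappa_pos]
    have hsq : η / (κ * (1 + C)) ^ 2 * D I a ^ 2 ≤ η * e (i m) m ^ 2 := by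
      rw [div_mul_eq_mul_div, div_le_iff₀ (by positivity)]
      nlinarith [h.eta_pos, pow_le_pow_left₀ hDa hDa_le 2]
    calc D I (T + 1) = √(D I (T + 1) ^ 2) := (Real.sqrt_sq (h.inter_nonneg I _)).symm
      _ ≤ √((1 - η / (κ * (1 + C)) ^ 2) * D I a ^ 2) := Real.sqrt_le_sqrt (by linarith)
      _ = √(1 - η / (κ * (1 + C)) ^ 2) * D I a := by
          rw [Real.sqrt_mul' _ (sq_nonneg _), Real.sqrt_sq hDa]

theorem exists_sum_le_inter (h : IsRegularFejerSystem κ η i s e D)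
    (hC : IsStepSumBound i s e k C) (hC₀ : 0 ≤ C) :
    ∃ W, 0 ≤ W ∧ ∀ I : Finset ι, #I ≤ k + 1 → ∀ a b, (∀ n ∈ Ico a b, i n ∈ I) →
      ∑ n ∈ Ico a b, s n ≤ W * D I a := by
  set q := √(1 - η / (κ * (1 + C)) ^ 2)
  have hq : q < 1 := by
    have : 0 < η / (κ * (1 + C)) ^ 2 := by have := h.kappa_pos; have := h.eta_pos; positivity
    rw [Real.sqrt_lt' one_pos]
    linarith
  refine ⟨(C + 2) / (1 - q), div_nonneg (by linarith) (by linarith), fun I hI a b hctrl => ?_⟩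
  refine sum_Ico_le_of_contraction (h.inter_nonneg I) (by linarith) (Real.sqrt_nonneg _) hq
    fun a' ha' => h.sum_le_or_exists_contraction hC hC₀ hI fun n hn => hctrl n ?_
  exact Ico_subset_Ico_left ha' hn

theorem exists_isStepSumBound (h : IsRegularFejerSystem κ η i s e D) (k : ℕ) :
    ∃ C, 0 ≤ C ∧ IsStepSumBound i s e k C := by
  induction k with
  | zero =>
    refine ⟨0, le_rfl, fun I hI a b δ _ hctrl _ => ?_⟩
    rw [card_eq_zero.1 (Nat.le_zero.1 hI)] at hctrl
    simp_all [Ico_eq_empty_of_le]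
  | succ k ih =>
    obtain ⟨C, hC₀, hC⟩ := ih
    obtain ⟨W, hW₀, hW⟩ := h.exists_sum_le_inter hC hC₀
    refine ⟨C + W * (κ * (1 + C)), by have := h.kappa_pos; positivity,
      fun I hI a b δ hδ hctrl hdist => ?_⟩
    by_cases hk : k < #((Ico a b).image i)
    swap
    · refine (hC _ (not_lt.1 hk) a b δ hδ (fun n hn => mem_image_of_mem i hn) hdist).trans ?_
      have := h.kappa_pos
      gcongr
      linarith [mul_nonneg hW₀ (by positivity : 0 ≤ κ * (1 + C))]
    obtain ⟨T, hT, hTk, hvis⟩ := exists_cover_time hI hctrl hk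
    obtain ⟨haT, hTb⟩ := mem_Ico.1 hT
    have hIT : Icc a T ⊆ Ico a b := Icc_subset_Ico_right hTb
    have hsum : ∑ n ∈ Ico a T, s n ≤ C * δ :=
      hC _ hTk a T δ hδ (fun n hn => mem_image_of_mem i hn)
        fun n hn => hdist n (hIT (Ico_subset_Icc_self hn))
    have hIne : I.Nonempty := ⟨i a, hctrl a (hIT (left_mem_Icc.2 haT))⟩
    have hDT := h.inter_le_of_forall_visited hIne hvis (fun n hn => hdist n (hIT hn))
      (right_mem_Icc.2 haT)
    have htail := hW I hI T b fun n hn => hctrl n (Ico_subset_Ico_left haT hn)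
    have := h.kappa_pos
    calc ∑ n ∈ Ico a b, s n = ∑ n ∈ Ico a T, s n + ∑ n ∈ Ico T b, s n :=
          (sum_Ico_consecutive _ haT hTb.le).symm
      _ ≤ C * δ + W * (κ * (δ + C * δ)) := by
          gcongr
          exact htail.trans (by gcongr; exact hDT.trans (by gcongr))
      _ = (C + W * (κ * (1 + C))) * δ := by ring

theorem summable [Fintype ι] (h : IsRegularFejerSystem κ η i s e D) : Summable s := by
  obtain ⟨C, -, hC⟩ := h.exists_isStepSumBound (Fintype.card ι)
  refine summable_of_sum_range_le (c := C * D univ 0) h.step_nonneg fun b => ?_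
  rw [range_eq_Ico]
  exact hC univ card_univ.le 0 b _ (h.inter_nonneg univ 0) (fun n _ => mem_univ _)
    fun n hn => h.step_dist_le_inter (fun n _ => mem_univ _) hn

end IsRegularFejerSystem

section Trajectory

variable {H : Type*} [NormedAddCommGroup H] [InnerProductSpace ℝ H] {ι : Type*}

theorem exists_pos_uniform_regularity_constant [Finite ι] (V : ι → Submodule ℝ H)
    (hreg : ∀ (I : Finset ι) (hI : I.Nonempty), ∃ κ : ℝ, ∀ x : H,
      infDist x ((⨅ i ∈ I, V i : Submodule ℝ H) : Set H) ≤
        κ * I.sup' hI (fun i => infDist x (V i : Set H))) :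
    ∃ κ > 0, ∀ (I : Finset ι) (hI : I.Nonempty) (x : H),
      infDist x ((⨅ i ∈ I, V i : Submodule ℝ H) : Set H) ≤
        κ * I.sup' hI (fun i => infDist x (V i : Set H)) := by
  choose K hK using hreg
  obtain ⟨M, hM⟩ := Finite.bddAbove_range fun I : Finset ι => if hI : I.Nonempty then K I hI else 0
  refine ⟨max M 1, by positivity, fun I hI x => (hK I hI x).trans ?_⟩
  have hKM : K I hI ≤ M := by simpa [hI] using hM (Set.mem_range_self I)
  obtain ⟨j, hj⟩ := hI
  gcongr
  · exact infDist_nonneg.trans (le_sup' (fun i => infDist x (V i : Set H)) hj)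
  · exact le_max_of_le_left hKM

theorem isRegularFejerSystem_of_relaxProj [CompleteSpace H] (V : ι → Submodule ℝ H)
    [∀ i, CompleteSpace (V i)] {κ η : ℝ} (hκ : 0 < κ) (hη : η ∈ Set.Ioc (0 : ℝ) 1)
    (hreg : ∀ (I : Finset ι) (hI : I.Nonempty) (x : H),
      infDist x ((⨅ i ∈ I, V i : Submodule ℝ H) : Set H) ≤
        κ * I.sup' hI (fun i => infDist x (V i : Set H)))
    {i : ℕ → ι} {lam : ℕ → ℝ} (hlam : ∀ n, lam n ∈ Set.Icc η (2 - η)) {x : ℕ → H}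
    (hx : ∀ n, x (n + 1) = relaxProj (V (i n)) (lam n) (x n)) :
    IsRegularFejerSystem κ η i (fun n => ‖x (n + 1) - x n‖)
      (fun j n => infDist (x n) (V j : Set H))
      (fun I n => infDist (x n) ((⨅ j ∈ I, V j : Submodule ℝ H) : Set H)) where
  kappa_pos := hκ
  eta_pos := hη.1
  step_nonneg n := norm_nonneg _
  step_le n := by
    obtain ⟨hl₁, hl₂⟩ := hlam n
    rw [hx, norm_relaxProj_sub_self_s1, abs_of_nonneg (by linarith [hη.1])]
    exact mul_le_mul_of_nonneg_right (by linarith [hη.1]) infDist_nonneg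
  abs_sub_le j n := by
    simpa [Real.dist_eq, dist_eq_norm] using
      (lipschitz_infDist_pt (V j : Set H)).dist_le_mul (x (n + 1)) (x n)
  inter_nonneg I n := infDist_nonneg
  le_inter I n hn := infDist_le_infDist_of_subset
    (SetLike.coe_subset_coe.2 (iInf₂_le (i n) hn)) ⟨0, Submodule.zero_mem _⟩
  fejer I n hn := by
    have := Submodule.completeSpace_biInf V I
    obtain ⟨hl₁, hl₂⟩ := hlam n
    have hη_le : η ≤ lam n * (2 - lam n) := by
      nlinarith [mul_nonneg (sub_nonneg.2 hl₁) (sub_nonneg.2 hl₂),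
        mul_nonneg hη.1.le (sub_nonneg.2 hη.2)]
    have hfejer := infDist_relaxProj_sq_le (W := ⨅ j ∈ I, V j) (iInf₂_le (i n) hn) (lam n) (x n)
    rw [← hx] at hfejer
    refine hfejer.trans (sub_le_sub_left ?_ _)
    exact mul_le_mul_of_nonneg_right hη_le (sq_nonneg _)
  inter_le I hI n r hr := (hreg I hI (x n)).trans
    (mul_le_mul_of_nonneg_left (sup'_le hI _ hr) hκ.le)

end Trajectory

theorem stmt_1_general {H : Type*} [NormedAddCommGroup H] [InnerProductSpace ℝ H] [CompleteSpace H]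
    (N : ℕ) (V : Fin N → Submodule ℝ H) [∀ i, CompleteSpace (V i)]
    (hreg : ∀ (I : Finset (Fin N)) (hI : I.Nonempty), ∃ κ : ℝ,
      ∀ x : H, infDist x ((⨅ i ∈ I, V i : Submodule ℝ H) : Set H) ≤
        κ * I.sup' hI (fun i => infDist x (V i : Set H)))
    (η : ℝ) (hη : η ∈ Set.Ioc (0 : ℝ) 1) :
    ∀ (i : ℕ → Fin N) (lam : ℕ → ℝ),
      (∀ n, lam n ∈ Set.Icc η (2 - η)) →
      ∀ x : ℕ → H, (∀ n, x (n + 1) = relaxProj (V (i n)) (lam n) (x n)) →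
        Summable (fun n => ‖x (n + 1) - x n‖) ∧
        ∃ L : H, Tendsto x atTop (nhds L) := by
  intro i lam hlam x hx
  obtain ⟨κ, hκ, hκreg⟩ := exists_pos_uniform_regularity_constant V hreg
  have hsum : Summable fun n => ‖x (n + 1) - x n‖ :=
    (isRegularFejerSystem_of_relaxProj V hκ hη hκreg hlam hx).summable
  refine ⟨hsum, cauchySeq_tendsto_of_complete (cauchySeq_of_summable_dist ?_)⟩
  simpa [dist_eq_norm, norm_sub_rev] using hsum

/-- Under innate regularity, all trajectories of unrestricted relaxed
projections have absolutely summable displacements; in particular they converge in norm. -/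
theorem stmt_1 {H : Type*} [NormedAddCommGroup H] [InnerProductSpace ℝ H] [CompleteSpace H]
    (N : ℕ) (hN : 1 ≤ N) (V : Fin N → Submodule ℝ H) [∀ i, CompleteSpace (V i)]
    (hreg : ∀ (I : Finset (Fin N)) (hI : I.Nonempty), ∃ κ : ℝ,
      ∀ x : H, infDist x ((⨅ i ∈ I, V i : Submodule ℝ H) : Set H) ≤
        κ * I.sup' hI (fun i => infDist x (V i : Set H)))
    (η : ℝ) (hη : η ∈ Set.Ioc (0 : ℝ) 1) :
    ∀ (i : ℕ → Fin N) (lam : ℕ → ℝ),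
      (∀ n, lam n ∈ Set.Icc η (2 - η)) →
      ∀ x : ℕ → H, (∀ n, x (n + 1) = relaxProj (V (i n)) (lam n) (x n)) →
        Summable (fun n => ‖x (n + 1) - x n‖) ∧
        ∃ L : H, Tendsto x atTop (nhds L) :=
  stmt_1_general N V hreg η hη
end

section
/- Let V and W be closed subspaces of a real Hilbert space H, and let c := sup{ |⟨v,w⟩| : v ∈ V ∩ (V∩W)^⊥, w ∈ W ∩ (V∩W)^⊥, ‖v‖ ≤ 1, ‖w‖ ≤ 1 } (so that c = cos φ(V,W) where φ(V,W) is the Friedrichs angle between V and W; the supremum over the empty set is taken to be 0). Then for all x ∈ H, d(x, V∩W)·√(1−c²) ≤ d(x,V) + d(x,W). -/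
open Metric
open scoped RealInnerProductSpace

/-!
Replacing `x` by `x - P_{V ∩ W} x` changes none of the three distances, so we may assume
`x ⊥ V ∩ W`. Then `P_V x` and `P_W x` are also orthogonal to `V ∩ W`, so
`⟪P_V x, P_W x⟫ ≤ c ‖P_V x‖ ‖P_W x‖`. Combined with Cauchy–Schwarz for the residuals
`x - P_V x`, `x - P_W x` and with Pythagoras, this leaves a real inequality between
`‖x‖`, `‖P_V x‖`, `‖P_W x‖`, `d(x, V)` and `d(x, W)`.
-/

/-- Read `n = ‖x‖`, `p = ‖P_V x‖`, `q = ‖P_W x‖`, `a = d(x, V)`, `b = d(x, W)`. -/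
theorem sq_mul_one_sub_sq_le_sq_add {n p q a b c : ℝ} (ha : 0 ≤ a) (hb : 0 ≤ b)
    (hpa : p ^ 2 + a ^ 2 = n ^ 2) (hqb : q ^ 2 + b ^ 2 = n ^ 2)
    (h : n ^ 2 ≤ a ^ 2 + b ^ 2 + a * b + c * p * q) :
    n ^ 2 * (1 - c ^ 2) ≤ (a + b) ^ 2 := by
  by_contra! hlt
  set s := n ^ 2 - a ^ 2 - b ^ 2 - a * b with hs_def
  have hs_pos : 0 < s := by nlinarith [mul_nonneg ha hb, sq_nonneg c, sq_nonneg n]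
  have hs_sq : s ^ 2 ≤ c ^ 2 * p ^ 2 * q ^ 2 := by
    have : s ≤ c * p * q := by linarith
    nlinarith
  have hpq : 0 < p ^ 2 * q ^ 2 := by
    have : (a + b) ^ 2 < n ^ 2 := by nlinarith [sq_nonneg c, sq_nonneg n]
    apply mul_pos <;> nlinarith
  have hidentity : n ^ 2 * s ^ 2 =
      (n ^ 2 - (a + b) ^ 2) * (p ^ 2 * q ^ 2) + (a * b * (a + b)) ^ 2 := by
    rw [eq_sub_of_add_eq hpa, eq_sub_of_add_eq hqb, hs_def]; ring
  -- Squaring `s ≤ c p q` against this identity gives `p²q² ((1 - c²) n² - (a + b)²) ≤ 0`.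
  nlinarith [mul_pos hpq (sub_pos.2 hlt), mul_le_mul_of_nonneg_left hs_sq (sq_nonneg n)]

namespace Submodule

section RCLike

variable {𝕜 E : Type*} [RCLike 𝕜] [NormedAddCommGroup E] [InnerProductSpace 𝕜 E]

theorem infDist_eq_norm_sub_starProjection_s6 (K : Submodule 𝕜 E) [K.HasOrthogonalProjection]
    (x : E) : infDist x (K : Set E) = ‖x - K.starProjection x‖ := by
  rw [infDist_eq_iInf, starProjection_minimal]
  simp_rw [dist_eq_norm]
  rfl

theorem sub_starProjection_sub_of_mem (K : Submodule 𝕜 E) [K.HasOrthogonalProjection]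
    {u : E} (hu : u ∈ K) (x : E) :
    x - u - K.starProjection (x - u) = x - K.starProjection x := by
  rw [map_sub, starProjection_eq_self_iff.mpr hu]
  abel

theorem starProjection_mem_orthogonal_of_le {U K : Submodule 𝕜 E} [K.HasOrthogonalProjection]
    (hUK : U ≤ K) {x : E} (hx : x ∈ Uᗮ) : K.starProjection x ∈ Uᗮ := by
  intro u hu
  rw [← inner_starProjection_left_eq_right, starProjection_eq_self_iff.mpr (hUK hu)]
  exact hx u hu

end RCLike

variable {H : Type*} [NormedAddCommGroup H] [InnerProductSpace ℝ H]

theorem norm_sq_starProjection_add_norm_sq_sub (K : Submodule ℝ H) [K.HasOrthogonalProjection]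
    (x : H) : ‖K.starProjection x‖ ^ 2 + ‖x - K.starProjection x‖ ^ 2 = ‖x‖ ^ 2 := by
  rw [← starProjection_orthogonal_val]
  exact (K.norm_sq_eq_add_norm_sq_starProjection x).symm

theorem real_inner_starProjection_right (K : Submodule ℝ H) [K.HasOrthogonalProjection]
    (x : H) : ⟪x, K.starProjection x⟫ = ‖K.starProjection x‖ ^ 2 := by
  rw [← real_inner_self_eq_norm_sq, inner_starProjection_left_eq_right,
    starProjection_eq_self_iff.mpr (K.starProjection_apply_mem x)]

noncomputable def friedrichsCos (V W : Submodule ℝ H) : ℝ :=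
  sSup {r : ℝ | ∃ v w : H, v ∈ V ⊓ (V ⊓ W)ᗮ ∧ w ∈ W ⊓ (V ⊓ W)ᗮ ∧
    ‖v‖ ≤ 1 ∧ ‖w‖ ≤ 1 ∧ r = |⟪v, w⟫|}

theorem abs_inner_le_friedrichsCos {V W : Submodule ℝ H} {v w : H}
    (hv : v ∈ V ⊓ (V ⊓ W)ᗮ) (hw : w ∈ W ⊓ (V ⊓ W)ᗮ) :
    |⟪v, w⟫| ≤ friedrichsCos V W * ‖v‖ * ‖w‖ := by
  rcases eq_or_ne v 0 with rfl | hv0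
  · simp
  rcases eq_or_ne w 0 with rfl | hw0
  · simp
  have hbdd : BddAbove {r : ℝ | ∃ v w : H, v ∈ V ⊓ (V ⊓ W)ᗮ ∧ w ∈ W ⊓ (V ⊓ W)ᗮ ∧
      ‖v‖ ≤ 1 ∧ ‖w‖ ≤ 1 ∧ r = |⟪v, w⟫|} := by
    refine ⟨1, ?_⟩
    rintro _ ⟨v, w, -, -, hv1, hw1, rfl⟩
    exact (abs_real_inner_le_norm v w).trans (mul_le_one₀ hv1 (norm_nonneg w) hw1)
  have hunit : |⟪‖v‖⁻¹ • v, ‖w‖⁻¹ • w⟫| ≤ friedrichsCos V W :=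
    le_csSup hbdd ⟨_, _, smul_mem _ _ hv, smul_mem _ _ hw,
      (norm_smul_inv_norm hv0).le, (norm_smul_inv_norm hw0).le, rfl⟩
  rw [real_inner_smul_left, real_inner_smul_right, abs_mul, abs_mul, abs_inv, abs_inv,
    abs_norm, abs_norm, inv_mul_le_iff₀ (norm_pos_iff.2 hv0),
    inv_mul_le_iff₀ (norm_pos_iff.2 hw0)] at hunit
  linarith

theorem norm_mul_sqrt_one_sub_friedrichsCos_sq_le {V W : Submodule ℝ H}
    [V.HasOrthogonalProjection] [W.HasOrthogonalProjection] {x : H} (hx : x ∈ (V ⊓ W)ᗮ) :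
    ‖x‖ * √(1 - friedrichsCos V W ^ 2) ≤
      ‖x - V.starProjection x‖ + ‖x - W.starProjection x‖ := by
  set v := V.starProjection x
  set w := W.starProjection x
  have hv : v ∈ V ⊓ (V ⊓ W)ᗮ :=
    ⟨V.starProjection_apply_mem x, starProjection_mem_orthogonal_of_le inf_le_left hx⟩
  have hw : w ∈ W ⊓ (V ⊓ W)ᗮ :=
    ⟨W.starProjection_apply_mem x, starProjection_mem_orthogonal_of_le inf_le_right hx⟩
  have hcs : -(‖x - v‖ * ‖x - w‖) ≤ ⟪x - v, x - w⟫ :=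
    neg_le_of_abs_le (abs_real_inner_le_norm _ _)
  have hxv : ⟪x, v⟫ = ‖v‖ ^ 2 := V.real_inner_starProjection_right x
  have hxw : ⟪x, w⟫ = ‖w‖ ^ 2 := W.real_inner_starProjection_right x
  have hexpand : ⟪x - v, x - w⟫ = ‖x‖ ^ 2 - ‖v‖ ^ 2 - ‖w‖ ^ 2 + ⟪v, w⟫ := by
    rw [inner_sub_left, inner_sub_right, inner_sub_right, real_inner_self_eq_norm_sq,
      real_inner_comm x v, hxv, hxw]
    ring
  have hangle : ⟪v, w⟫ ≤ friedrichsCos V W * ‖v‖ * ‖w‖ :=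
    (le_abs_self _).trans (abs_inner_le_friedrichsCos hv hw)
  have hsq := sq_mul_one_sub_sq_le_sq_add (norm_nonneg (x - v)) (norm_nonneg (x - w))
    (V.norm_sq_starProjection_add_norm_sq_sub x) (W.norm_sq_starProjection_add_norm_sq_sub x)
    (by linarith [V.norm_sq_starProjection_add_norm_sq_sub x,
      W.norm_sq_starProjection_add_norm_sq_sub x])
  calc ‖x‖ * √(1 - friedrichsCos V W ^ 2)
      = √(‖x‖ ^ 2 * (1 - friedrichsCos V W ^ 2)) := by
        rw [Real.sqrt_mul (sq_nonneg _), Real.sqrt_sq (norm_nonneg _)]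
    _ ≤ √((‖x - v‖ + ‖x - w‖) ^ 2) := Real.sqrt_le_sqrt hsq
    _ = ‖x - v‖ + ‖x - w‖ := Real.sqrt_sq (by positivity)

end Submodule

open Submodule in
/-- quantitative regularity for two subspaces via the Friedrichs angle:
`d(x, V ∩ W)·sin φ(V,W) ≤ d(x,V) + d(x,W)`. -/
theorem stmt_6 {H : Type*} [NormedAddCommGroup H] [InnerProductSpace ℝ H] [CompleteSpace H]
    (V W : Submodule ℝ H) [CompleteSpace V] [CompleteSpace W]
    (c : ℝ)
    (hc : c = sSup {r : ℝ | ∃ v w : H, v ∈ V ⊓ (V ⊓ W)ᗮ ∧ w ∈ W ⊓ (V ⊓ W)ᗮ ∧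
      ‖v‖ ≤ 1 ∧ ‖w‖ ≤ 1 ∧ r = |⟪v, w⟫|}) :
    ∀ x : H, infDist x ((V ⊓ W : Submodule ℝ H) : Set H) * Real.sqrt (1 - c ^ 2) ≤
      infDist x (V : Set H) + infDist x (W : Set H) := by
  obtain rfl : c = friedrichsCos V W := hc
  intro x
  have : CompleteSpace (V ⊓ W : Submodule ℝ H) := by
    have hV := (completeSpace_coe_iff_isComplete.mp ‹CompleteSpace V›).isClosed
    have hW := (completeSpace_coe_iff_isComplete.mp ‹CompleteSpace W›).isClosed
    exact (hV.inter hW).completeSpace_coe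
  have hPx := mem_inf.1 ((V ⊓ W).starProjection_apply_mem x)
  rw [infDist_eq_norm_sub_starProjection_s6, infDist_eq_norm_sub_starProjection_s6,
    infDist_eq_norm_sub_starProjection_s6, ← V.sub_starProjection_sub_of_mem hPx.1,
    ← W.sub_starProjection_sub_of_mem hPx.2]
  exact norm_mul_sqrt_one_sub_friedrichsCos_sq_le (sub_starProjection_mem_orthogonal x)
end

section
/- Let V and W be closed subspaces of a real Hilbert space H with V ⊆ W. Then for every λ ∈ [0,2] and every x ∈ H, the relaxed projection does not increase the relative distance to V: d(P_{W,λ}x, V)·‖x‖ ≤ d(x, V)·‖P_{W,λ}x‖ (equivalently, θ_V(P_{W,λ}x) ≤ θ_V(x)). -/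
open Metric

/-! Write `y = P_{W,λ} x`. Since `V ≤ W`, `P_V y = P_V x =: p`, so by Pythagoras
`d(x,V)² = ‖x‖² - ‖p‖²` and `d(y,V)² = ‖y‖² - ‖p‖²`. The claim then reduces to `‖y‖ ≤ ‖x‖`,
which holds because `y = P_W x + (1 - λ)(x - P_W x)` with `|1 - λ| ≤ 1`. -/

section RelaxedProjection

variable {H : Type*} [NormedAddCommGroup H] [InnerProductSpace ℝ H]

namespace Submodule

theorem infDist_eq_norm_sub_starProjection_s9 (V : Submodule ℝ H) [V.HasOrthogonalProjection]
    (x : H) : infDist x (V : Set H) = ‖x - V.starProjection x‖ := by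
  rw [infDist_eq_iInf, starProjection_minimal]
  congr 1 with y
  rw [dist_eq_norm]

theorem norm_starProjection_add_smul_sub_sq (V : Submodule ℝ H) [V.HasOrthogonalProjection]
    (c : ℝ) (x : H) :
    ‖V.starProjection x + c • (x - V.starProjection x)‖ ^ 2 =
      ‖V.starProjection x‖ ^ 2 + c ^ 2 * ‖x - V.starProjection x‖ ^ 2 := by
  have hortho : inner ℝ (V.starProjection x) (c • (x - V.starProjection x)) = 0 := by
    rw [real_inner_smul_right, real_inner_comm,
      V.starProjection_inner_eq_zero x _ (V.starProjection_apply_mem x), mul_zero]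
  rw [sq, sq, norm_add_sq_eq_norm_sq_add_norm_sq_real hortho, norm_smul, Real.norm_eq_abs]
  nlinarith [sq_abs c]

theorem norm_sq_eq_norm_starProjection_sq_add_norm_sub_sq (V : Submodule ℝ H)
    [V.HasOrthogonalProjection] (x : H) :
    ‖x‖ ^ 2 = ‖V.starProjection x‖ ^ 2 + ‖x - V.starProjection x‖ ^ 2 := by
  simpa using V.norm_starProjection_add_smul_sub_sq 1 x

theorem infDist_sq_add_norm_starProjection_sq (V : Submodule ℝ H) [V.HasOrthogonalProjection]
    (x : H) : infDist x (V : Set H) ^ 2 + ‖V.starProjection x‖ ^ 2 = ‖x‖ ^ 2 := by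
  rw [infDist_eq_norm_sub_starProjection_s9, V.norm_sq_eq_norm_starProjection_sq_add_norm_sub_sq x]
  ring

end Submodule

theorem relaxProj_eq_starProjection_add_smul (W : Submodule ℝ H) [W.HasOrthogonalProjection]
    (l : ℝ) (x : H) :
    relaxProj W l x = W.starProjection x + (1 - l) • (x - W.starProjection x) := by
  rw [relaxProj, ← Submodule.starProjection_apply]
  module

theorem starProjection_relaxProj_of_le {V W : Submodule ℝ H} [V.HasOrthogonalProjection]
    [W.HasOrthogonalProjection] (hVW : V ≤ W) (l : ℝ) (x : H) :
    V.starProjection (relaxProj W l x) = V.starProjection x := by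
  rw [relaxProj, map_add, map_smul, map_smul, ← Submodule.starProjection_apply,
    ← ContinuousLinearMap.comp_apply, Submodule.starProjection_comp_starProjection_of_le hVW]
  module

theorem norm_relaxProj_le (W : Submodule ℝ H) [W.HasOrthogonalProjection] {l : ℝ}
    (hl : l ∈ Set.Icc (0 : ℝ) 2) (x : H) : ‖relaxProj W l x‖ ≤ ‖x‖ := by
  have hcoef : (1 - l) ^ 2 ≤ 1 := by nlinarith [hl.1, hl.2]
  refine (pow_le_pow_iff_left₀ (norm_nonneg _) (norm_nonneg _) two_ne_zero).1 ?_
  rw [relaxProj_eq_starProjection_add_smul, W.norm_starProjection_add_smul_sub_sq,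
    W.norm_sq_eq_norm_starProjection_sq_add_norm_sub_sq x]
  gcongr
  exact mul_le_of_le_one_left (sq_nonneg _) hcoef

end RelaxedProjection

theorem stmt_9_general {H : Type*} [NormedAddCommGroup H] [InnerProductSpace ℝ H]
    (V W : Submodule ℝ H) [CompleteSpace V] [CompleteSpace W] (hVW : V ≤ W)
    (l : ℝ) (hl : l ∈ Set.Icc (0 : ℝ) 2) (x : H) :
    infDist (relaxProj W l x) (V : Set H) * ‖x‖ ≤
      infDist x (V : Set H) * ‖relaxProj W l x‖ := by
  set y := relaxProj W l x
  have hx := V.infDist_sq_add_norm_starProjection_sq x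
  have hy := V.infDist_sq_add_norm_starProjection_sq y
  rw [starProjection_relaxProj_of_le hVW] at hy
  have hyx : ‖y‖ ^ 2 ≤ ‖x‖ ^ 2 := by gcongr; exact norm_relaxProj_le W hl x
  refine (pow_le_pow_iff_left₀ (mul_nonneg infDist_nonneg (norm_nonneg _))
    (mul_nonneg infDist_nonneg (norm_nonneg _)) two_ne_zero).1 ?_
  rw [mul_pow, mul_pow]
  linear_combination ‖V.starProjection x‖ ^ 2 * hyx - ‖y‖ ^ 2 * hx + ‖x‖ ^ 2 * hy

/-- relaxed projection onto `W` does not increase the relative distance to a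
subspace `V ⊆ W`: `θ_V(P_{W,λ}x) ≤ θ_V(x)`, in cleared-denominator form. -/
theorem stmt_9 {H : Type*} [NormedAddCommGroup H] [InnerProductSpace ℝ H] [CompleteSpace H]
    (V W : Submodule ℝ H) [CompleteSpace V] [CompleteSpace W] (hVW : V ≤ W)
    (l : ℝ) (hl : l ∈ Set.Icc (0 : ℝ) 2) (x : H) :
    infDist (relaxProj W l x) (V : Set H) * ‖x‖ ≤
      infDist x (V : Set H) * ‖relaxProj W l x‖ :=
  stmt_9_general V W hVW l hl x
end

section
/- Let H be a real Hilbert space, V_1,…,V_N closed subspaces of H, and suppose κ ≥ 2 is a constant such that d(x, V_I ∩ V_J) ≤ κ·max(d(x, V_I), d(x, V_J)) for all I, J ⊆ {1,…,N} and all x ∈ H. Let (i_n)_{n≥0} be any sequence in {1,…,N}, (λ_n)_{n≥0} any sequence in [0,2], x_0 ∈ H, and define the trajectory x_{n+1} := P_{i_n,λ_n}(x_n). Set I_n := {i_k : 0 ≤ k ≤ n}. Then for every n ≥ 0, θ_{V_{I_n}}(x_{n+1}) ≤ κ^{|I_n|} · max_{0 ≤ k ≤ n} θ_{V_{i_k}}(x_k).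 -/
/-!
A relaxed projection onto `V_i` keeps `P_{V_i} x` and multiplies the component of `x` in
`V_iᗮ` by `1 - λ`, with `|1 - λ| ≤ 1`. For `W ≤ V_i`, Pythagoras gives
`θ_W(x)² = (d(P x, W)² + β) / (‖P x‖² + β)` with `β` the squared orthogonal component, which is
nondecreasing in `β` because `d(P x, W) ≤ ‖P x‖`; so no step increases `θ_{V_{I_n}}`. When a new
index `j` joins `I`, regularity gives `θ_{V_I ∩ V_j} ≤ κ · max (θ_{V_I}, θ_{V_j})`, costing one
factor `κ` per new index.
-/

open Metric

/-- The relative distance function `θ_V(x) = d(x,V)/‖x‖` (with `θ_V(0) = 0`). -/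
noncomputable def relDist {H : Type*} [NormedAddCommGroup H] [InnerProductSpace ℝ H]
    (V : Submodule ℝ H) (x : H) : ℝ :=
  infDist x (V : Set H) / ‖x‖

lemma infDist_sq_eq_of_dist_sq_eq {α : Type*} [PseudoMetricSpace α] {s : Set α}
    (hs : s.Nonempty) {p y : α} {c : ℝ} (h : ∀ w ∈ s, dist y w ^ 2 = dist p w ^ 2 + c) :
    infDist y s ^ 2 = infDist p s ^ 2 + c := by
  refine le_antisymm ?_ ?_
  · suffices √(infDist y s ^ 2 - c) ≤ infDist p s by
      linarith [(Real.sqrt_le_left infDist_nonneg).1 this]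
    refine (le_infDist hs).2 fun w hw => (Real.sqrt_le_left dist_nonneg).2 ?_
    nlinarith [h w hw, infDist_le_dist_of_mem (x := y) hw, infDist_nonneg (x := y) (s := s)]
  · refine (Real.sqrt_le_left infDist_nonneg).1 ((le_infDist hs).2 fun w hw => ?_)
    rw [Real.sqrt_le_left dist_nonneg, h w hw]
    nlinarith [infDist_le_dist_of_mem (x := p) hw, infDist_nonneg (x := p) (s := s)]

lemma add_div_add_le_add_div_add {a b u v : ℝ} (ha : 0 ≤ a) (hab : a ≤ b) (hu : 0 ≤ u)
    (huv : u ≤ v) : (a + u) / (b + u) ≤ (a + v) / (b + v) := by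
  rcases (add_nonneg (ha.trans hab) hu).eq_or_lt with h0 | hpos
  · rw [← h0, div_zero]
    exact div_nonneg (by linarith) (by linarith)
  · rw [div_le_div_iff₀ hpos (by linarith)]
    nlinarith [mul_nonneg (sub_nonneg.2 huv) (sub_nonneg.2 hab)]

section RelDist

variable {H : Type*} [NormedAddCommGroup H] [InnerProductSpace ℝ H]

lemma relDist_nonneg (V : Submodule ℝ H) (x : H) : 0 ≤ relDist V x :=
  div_nonneg infDist_nonneg (norm_nonneg x)

lemma relDist_inf_le {W U : Submodule ℝ H} {y : H} {κ : ℝ}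
    (h : infDist y ((W ⊓ U : Submodule ℝ H) : Set H) ≤
      κ * max (infDist y (W : Set H)) (infDist y (U : Set H))) :
    relDist (W ⊓ U) y ≤ κ * max (relDist W y) (relDist U y) := by
  rw [relDist, relDist, relDist, max_div_div_right (norm_nonneg y), ← mul_div_assoc]
  exact div_le_div_of_nonneg_right h (norm_nonneg y)

lemma relDist_add_smul_sq {W V : Submodule ℝ H} (hWV : W ≤ V) {p b : H} (hp : p ∈ V)
    (hb : b ∈ Vᗮ) (t : ℝ) :
    relDist W (p + t • b) ^ 2 =
      (infDist p (W : Set H) ^ 2 + t ^ 2 * ‖b‖ ^ 2) / (‖p‖ ^ 2 + t ^ 2 * ‖b‖ ^ 2) := by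
  have pythag : ∀ v ∈ V, ‖v + t • b‖ ^ 2 = ‖v‖ ^ 2 + t ^ 2 * ‖b‖ ^ 2 := fun v hv => by
    rw [norm_add_sq_real, V.inner_right_of_mem_orthogonal hv (Vᗮ.smul_mem t hb), mul_zero,
      add_zero, norm_smul, mul_pow, Real.norm_eq_abs, sq_abs]
  have hdist : ∀ w ∈ (W : Set H), dist (p + t • b) w ^ 2 = dist p w ^ 2 + t ^ 2 * ‖b‖ ^ 2 :=
    fun w hw => by
      rw [dist_eq_norm, dist_eq_norm, show p + t • b - w = (p - w) + t • b by abel]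
      exact pythag _ (V.sub_mem hp (hWV hw))
  rw [relDist, div_pow, infDist_sq_eq_of_dist_sq_eq ⟨0, W.zero_mem⟩ hdist, pythag p hp]

lemma relDist_relaxProj_le {W V : Submodule ℝ H} [V.HasOrthogonalProjection] (hWV : W ≤ V)
    {l : ℝ} (hl : l ∈ Set.Icc (0 : ℝ) 2) (x : H) :
    relDist W (relaxProj V l x) ≤ relDist W x := by
  set p := (V.orthogonalProjectionOnto x : H)
  have hp : p ∈ V := SetLike.coe_mem _
  have hb : x - p ∈ Vᗮ := V.sub_starProjection_mem_orthogonal x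
  have hx : x = p + (1 : ℝ) • (x - p) := by module
  have hx' : relaxProj V l x = p + (1 - l) • (x - p) := by rw [relaxProj]; module
  have hpW : infDist p (W : Set H) ≤ ‖p‖ := by
    simpa using infDist_le_dist_of_mem (x := p) W.zero_mem
  have e' := relDist_add_smul_sq hWV hp hb (1 - l)
  have e := relDist_add_smul_sq hWV hp hb 1
  rw [← hx'] at e'
  rw [← hx] at e
  rw [← pow_le_pow_iff_left₀ (relDist_nonneg _ _) (relDist_nonneg _ _) two_ne_zero, e', e]
  refine add_div_add_le_add_div_add (sq_nonneg _)
    (pow_le_pow_left₀ infDist_nonneg hpW 2) (by positivity)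
    (mul_le_mul_of_nonneg_right (by nlinarith [hl.1, hl.2]) (sq_nonneg _))

end RelDist

section Regularity

variable {H ι : Type*} [NormedAddCommGroup H] [InnerProductSpace ℝ H]

def PairwiseLinearlyRegular (κ : ℝ) (V : ι → Submodule ℝ H) : Prop :=
  ∀ (I J : Finset ι) (x : H),
    infDist x ((((⨅ i ∈ I, V i) ⊓ ⨅ j ∈ J, V j) : Submodule ℝ H) : Set H) ≤
      κ * max (infDist x ((⨅ i ∈ I, V i : Submodule ℝ H) : Set H))
              (infDist x ((⨅ j ∈ J, V j : Submodule ℝ H) : Set H))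

lemma relDist_biInf_insert_le [DecidableEq ι] {κ : ℝ} {V : ι → Submodule ℝ H} (hκ : 1 ≤ κ)
    (hV : PairwiseLinearlyRegular κ V) {s : Finset ι} {j : ι} {y : H} {c : ℝ}
    (hs : relDist (⨅ k ∈ s, V k) y ≤ κ ^ s.card * c) (hj : relDist (V j) y ≤ c) :
    relDist (⨅ k ∈ insert j s, V k) y ≤ κ ^ (insert j s).card * c := by
  by_cases hjs : j ∈ s
  · rwa [Finset.insert_eq_of_mem hjs]
  have hc : 0 ≤ c := (relDist_nonneg _ _).trans hj
  have hreg := hV s {j} y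
  rw [Finset.iInf_singleton] at hreg
  rw [Finset.iInf_insert, inf_comm, Finset.card_insert_of_notMem hjs, pow_succ', mul_assoc]
  refine (relDist_inf_le hreg).trans
    (mul_le_mul_of_nonneg_left (max_le hs ?_) (zero_le_one.trans hκ))
  exact hj.trans (le_mul_of_one_le_left hc (one_le_pow₀ hκ))

end Regularity

theorem stmt_13_general {H : Type*} [NormedAddCommGroup H] [InnerProductSpace ℝ H]
    (N : ℕ) (V : Fin N → Submodule ℝ H) [∀ i, CompleteSpace (V i)]
    (κ : ℝ) (hκ : 2 ≤ κ)
    (hreg : ∀ (I J : Finset (Fin N)) (x : H),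
      infDist x ((((⨅ i ∈ I, V i) ⊓ ⨅ j ∈ J, V j) : Submodule ℝ H) : Set H) ≤
        κ * max (infDist x ((⨅ i ∈ I, V i : Submodule ℝ H) : Set H))
                (infDist x ((⨅ j ∈ J, V j : Submodule ℝ H) : Set H)))
    (i : ℕ → Fin N) (lam : ℕ → ℝ) (hlam : ∀ n, lam n ∈ Set.Icc (0 : ℝ) 2)
    (x : ℕ → H) (hx : ∀ n, x (n + 1) = relaxProj (V (i n)) (lam n) (x n)) :
    ∀ n : ℕ,
      relDist (⨅ j ∈ (Finset.range (n + 1)).image i, V j) (x (n + 1)) ≤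
        κ ^ ((Finset.range (n + 1)).image i).card *
          (Finset.range (n + 1)).sup' Finset.nonempty_range_add_one
            (fun k => relDist (V (i k)) (x k)) := by
  have hκ1 : 1 ≤ κ := by linarith
  intro n
  induction n with
  | zero =>
    rw [hx]
    simp only [zero_add, Finset.range_one, Finset.image_singleton, Finset.iInf_singleton,
      Finset.card_singleton, pow_one, Finset.sup'_singleton]
    exact (relDist_relaxProj_le le_rfl (hlam 0) (x 0)).trans
      (le_mul_of_one_le_left (relDist_nonneg _ _) hκ1)
  | succ n ih =>
    have hprev := ih.trans (mul_le_mul_of_nonneg_left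
      (Finset.sup'_mono _ (Finset.range_subset_range.2 (n + 1).le_succ) _) (by positivity))
    have hnew : relDist (V (i (n + 1))) (x (n + 1)) ≤
        (Finset.range (n + 1 + 1)).sup' Finset.nonempty_range_add_one
          (fun k => relDist (V (i k)) (x k)) :=
      Finset.le_sup' (fun k => relDist (V (i k)) (x k)) (Finset.self_mem_range_succ _)
    rw [hx, show (Finset.range (n + 1 + 1)).image i =
      insert (i (n + 1)) ((Finset.range (n + 1)).image i) by
        rw [Finset.range_add_one, Finset.image_insert]]
    exact (relDist_relaxProj_le (iInf₂_le _ (Finset.mem_insert_self _ _)) (hlam _) _).trans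
      (relDist_biInf_insert_le hκ1 hreg hprev hnew)

/-- growth lemma:
`θ_{V_{I_n}}(x_{n+1}) ≤ κ^{|I_n|} · max_{0≤k≤n} θ_{V_{i_k}}(x_k)`. -/
theorem stmt_13 {H : Type*} [NormedAddCommGroup H] [InnerProductSpace ℝ H] [CompleteSpace H]
    (N : ℕ) (hN : 1 ≤ N) (V : Fin N → Submodule ℝ H) [∀ i, CompleteSpace (V i)]
    (κ : ℝ) (hκ : 2 ≤ κ)
    (hreg : ∀ (I J : Finset (Fin N)) (x : H),
      infDist x ((((⨅ i ∈ I, V i) ⊓ ⨅ j ∈ J, V j) : Submodule ℝ H) : Set H) ≤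
        κ * max (infDist x ((⨅ i ∈ I, V i : Submodule ℝ H) : Set H))
                (infDist x ((⨅ j ∈ J, V j : Submodule ℝ H) : Set H)))
    (i : ℕ → Fin N) (lam : ℕ → ℝ) (hlam : ∀ n, lam n ∈ Set.Icc (0 : ℝ) 2)
    (x : ℕ → H) (hx : ∀ n, x (n + 1) = relaxProj (V (i n)) (lam n) (x n)) :
    ∀ n : ℕ,
      relDist (⨅ j ∈ (Finset.range (n + 1)).image i, V j) (x (n + 1)) ≤
        κ ^ ((Finset.range (n + 1)).image i).card *
          (Finset.range (n + 1)).sup' Finset.nonempty_range_add_one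
            (fun k => relDist (V (i k)) (x k)) :=
  stmt_13_general N V κ hκ hreg i lam hlam x hx
end
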